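/- arXiv:1808.06341 — 3 statements merged into one kernel-verified Lean document; each statement's English description precedes it below -/
import Mathlib

section
/- Let n_1,…,n_d ≥ 1 be real numbers, l > 0 a real number, c_1,…,c_{2m} < 0 with Σ_{i=1}^{2m} c_i = −l, and let A : ({1,…,d})^{2m} → ℝ be a function such that for every i ∈ {1,…,2m} and every j ∈ {1,…,d}, the sum over all other indices of |A| with the i-th index fixed to j is at most K. Then |Σ_{j ∈ [1:d]^{2m}} n_{j_1}^{c_1} ⋯ n_{j_{2m}}^{c_{2m}} A(j)| ≤ K · Σ_{j=1}^d n_j^{−l}. -/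
open Finset

/-!
By weighted AM–GM with the weights `c i / (-l)`, each product `∏ i, n (f i) ^ c i` is at most
the convex combination `∑ i, c i / (-l) * n (f i) ^ (-l)`. For a fixed `i`, grouping the
multi-indices `f` by the value `f i` and using the fiber bound on `|A|` bounds the `i`-th term
by `K * ∑ j, n j ^ (-l)`, and the weights sum to one.
-/

theorem Real.prod_rpow_le_sum_mul_rpow_of_nonpos {ι : Type*} (s : Finset ι) (x a : ι → ℝ)
    (l : ℝ) (hx : ∀ i ∈ s, 0 ≤ x i) (ha : ∀ i ∈ s, a i ≤ 0) (hl : 0 < l)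
    (hsum : ∑ i ∈ s, a i = -l) :
    ∏ i ∈ s, x i ^ a i ≤ ∑ i ∈ s, -a i / l * x i ^ (-l) := by
  have hweights : ∑ i ∈ s, -a i / l = 1 := by
    rw [← Finset.sum_div, Finset.sum_neg_distrib, hsum, neg_neg, div_self hl.ne']
  calc ∏ i ∈ s, x i ^ a i = ∏ i ∈ s, (x i ^ (-l)) ^ (-a i / l) := by
        refine Finset.prod_congr rfl fun i hi => ?_
        rw [← Real.rpow_mul (hx i hi)]
        congr 1
        field_simp
    _ ≤ ∑ i ∈ s, -a i / l * x i ^ (-l) :=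
        Real.geom_mean_le_arith_mean_weighted s _ _
          (fun i hi => div_nonneg (neg_nonneg.mpr (ha i hi)) hl.le) hweights
          (fun i hi => Real.rpow_nonneg (hx i hi) _)

theorem Finset.sum_mul_le_mul_sum_of_sum_fiber_le {α β : Type*} [Fintype α] [Fintype β]
    [DecidableEq β] (π : α → β) (g : β → ℝ) (B : α → ℝ) (K : ℝ) (hg : ∀ b, 0 ≤ g b)
    (hB : ∀ b, ∑ a ∈ univ.filter (fun a => π a = b), B a ≤ K) :
    ∑ a, g (π a) * B a ≤ K * ∑ b, g b := by
  rw [← Finset.sum_fiberwise univ π, Finset.mul_sum]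
  refine Finset.sum_le_sum fun b _ => ?_
  calc ∑ a ∈ univ.filter (fun a => π a = b), g (π a) * B a
      = g b * ∑ a ∈ univ.filter (fun a => π a = b), B a := by
        rw [Finset.mul_sum]
        exact Finset.sum_congr rfl fun a ha => by rw [(Finset.mem_filter.mp ha).2]
    _ ≤ g b * K := mul_le_mul_of_nonneg_left (hB b) (hg b)
    _ = K * g b := mul_comm _ _

theorem weighted_sum_bound
    (d m : ℕ) (n : Fin d → ℝ) (hn : ∀ j, 1 ≤ n j)
    (l : ℝ) (hl : 0 < l)
    (c : Fin (2 * m) → ℝ) (hc : ∀ i, c i < 0) (hcsum : ∑ i, c i = -l)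
    (A : (Fin (2 * m) → Fin d) → ℝ) (K : ℝ)
    (hK : ∀ (i : Fin (2 * m)) (j : Fin d),
      ∑ f ∈ Finset.univ.filter (fun f : Fin (2 * m) → Fin d => f i = j), |A f| ≤ K) :
    |∑ f : Fin (2 * m) → Fin d, (∏ i, n (f i) ^ (c i)) * A f|
      ≤ K * ∑ j, n j ^ (-l) := by
  have hn0 : ∀ j, 0 ≤ n j := fun j => zero_le_one.trans (hn j)
  have hprod_nonneg (f : Fin (2 * m) → Fin d) : 0 ≤ ∏ i, n (f i) ^ c i :=
    Finset.prod_nonneg fun i _ => Real.rpow_nonneg (hn0 _) _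
  have hamgm (f : Fin (2 * m) → Fin d) :=
    Real.prod_rpow_le_sum_mul_rpow_of_nonpos univ (fun i => n (f i)) c l
      (fun i _ => hn0 _) (fun i _ => (hc i).le) hl hcsum
  calc |∑ f : Fin (2 * m) → Fin d, (∏ i, n (f i) ^ (c i)) * A f|
      ≤ ∑ f : Fin (2 * m) → Fin d, (∏ i, n (f i) ^ (c i)) * |A f| := by
        refine (Finset.abs_sum_le_sum_abs _ _).trans_eq (Finset.sum_congr rfl fun f _ => ?_)
        rw [abs_mul, abs_of_nonneg (hprod_nonneg f)]
    _ ≤ ∑ f : Fin (2 * m) → Fin d, (∑ i, -c i / l * n (f i) ^ (-l)) * |A f| := by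
        gcongr with f
        exact hamgm f
    _ = ∑ i, -c i / l * ∑ f : Fin (2 * m) → Fin d, n (f i) ^ (-l) * |A f| := by
        simp_rw [Finset.sum_mul, Finset.mul_sum, mul_assoc]
        exact Finset.sum_comm
    _ ≤ ∑ i, -c i / l * (K * ∑ j, n j ^ (-l)) := by
        gcongr with i
        · exact div_nonneg (neg_nonneg.mpr (hc i).le) hl.le
        · exact Finset.sum_mul_le_mul_sum_of_sum_fiber_le (fun f => f i) (fun j => n j ^ (-l))
            (fun f => |A f|) K (fun j => Real.rpow_nonneg (hn0 j) _) (hK i)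
    _ = K * ∑ j, n j ^ (-l) := by
        rw [← Finset.sum_mul, ← Finset.sum_div, Finset.sum_neg_distrib, hcsum, neg_neg,
          div_self hl.ne', one_mul]
end

section
/- Deterministic array product bound (Proposition 2): Let A be a real array indexed by tuples over {1,…,d} on index set S ⊆ {1,…,k} and B a real array on index set T ⊆ {1,…,k}, with S ∪ T = {1,…,k} and S ∩ T ≠ ∅. Say an array D on index set U is K-bounded if for every i ∈ U and every value j ∈ {1,…,d}, the sum of |D| over all indices in U∖{i} with index i fixed to j is at most K. If A is K_A-bounded and B is K_B-bounded, then the array C with entries C(j_1,…,j_k) = A(j_S) B(j_T) is (K_A K_B)-bounded. -/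
open Finset

/-- An array indexed by tuples over `Fin d` (with index set `α`) is `K`-bounded
if every one-index marginal absolute sum is at most `K`. -/
def MarginBounded {α : Type*} [Fintype α] [DecidableEq α] (d : ℕ)
    (A : (α → Fin d) → ℝ) (K : ℝ) : Prop :=
  ∀ (i : α) (j : Fin d),
    ∑ f ∈ Finset.univ.filter (fun f : α → Fin d => f i = j), |A f| ≤ K

lemma MarginBounded.nonneg {α : Type*} [Fintype α] [DecidableEq α] {d : ℕ}
    {A : (α → Fin d) → ℝ} {K : ℝ} (hA : MarginBounded d A K) (i : α) (j : Fin d) :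
    0 ≤ K :=
  (sum_nonneg fun _ _ => abs_nonneg _).trans (hA i j)

section Restriction

variable {ι β : Type*} [Fintype ι] [DecidableEq ι] {S T : Finset ι}

lemma restrict_prod_injective (hST : S ∪ T = univ) :
    Function.Injective fun f : ι → β => ((fun x : S => f x), (fun x : T => f x)) := by
  intro f f' hff
  funext x
  have hx : x ∈ S ∪ T := hST ▸ mem_univ x
  rcases mem_union.mp hx with hxS | hxT
  · exact congrFun (congrArg Prod.fst hff) ⟨x, hxS⟩
  · exact congrFun (congrArg Prod.snd hff) ⟨x, hxT⟩

/-- A tuple is determined by its restrictions to `S` and `T`, so the left-hand sum is a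
subsum of the expanded product. -/
lemma sum_abs_mul_restrict_le (hST : S ∪ T = univ)
    (A : (S → β) → ℝ) (B : (T → β) → ℝ) (s : Finset (ι → β))
    (sA : Finset (S → β)) (sB : Finset (T → β))
    (hs : ∀ f ∈ s, (fun x : S => f x) ∈ sA ∧ (fun x : T => f x) ∈ sB) :
    ∑ f ∈ s, |A (fun x => f x)| * |B (fun x => f x)|
      ≤ (∑ g ∈ sA, |A g|) * ∑ h ∈ sB, |B h| := by
  classical
  calc ∑ f ∈ s, |A (fun x => f x)| * |B (fun x => f x)|
      = ∑ gh ∈ s.image fun f : ι → β => ((fun x : S => f x), (fun x : T => f x)),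
          |A gh.1| * |B gh.2| := by
        rw [sum_image fun _ _ _ _ h => restrict_prod_injective hST h]
    _ ≤ ∑ gh ∈ sA ×ˢ sB, |A gh.1| * |B gh.2| := by
        refine sum_le_sum_of_subset_of_nonneg ?_ fun _ _ _ => by positivity
        intro gh hgh
        obtain ⟨f, hf, rfl⟩ := mem_image.mp hgh
        exact mem_product.mpr (hs f hf)
    _ = (∑ g ∈ sA, |A g|) * ∑ h ∈ sB, |B h| := by
        rw [sum_mul_sum, sum_product]

end Restriction

/-- Split the marginal at `i ∈ S` along the value `j'` of a shared index `a ∈ S ∩ T`: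
for each `j'` the `B`-factor contributes at most its marginal `KB` at `(a, j')`, and the
remaining `A`-sums recombine over `j'` into the marginal of `A` at `(i, j)`. -/
lemma marginal_abs_mul_le_of_mem_left {ι : Type*} [Fintype ι] [DecidableEq ι] {d : ℕ}
    {S T : Finset ι} (hST : S ∪ T = univ) {a : ι} (haS : a ∈ S) (haT : a ∈ T)
    {A : (S → Fin d) → ℝ} {B : (T → Fin d) → ℝ} {KA KB : ℝ}
    (hA : MarginBounded d A KA) (hB : MarginBounded d B KB)
    {i : ι} (hiS : i ∈ S) (j : Fin d) :
    ∑ f ∈ univ.filter (fun f : ι → Fin d => f i = j),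
      |A (fun x => f x)| * |B (fun x => f x)| ≤ KA * KB := by
  let Ai : Finset (S → Fin d) := univ.filter fun g => g ⟨i, hiS⟩ = j
  have hfiber : ∀ j' : Fin d,
      ∑ f ∈ (univ.filter fun f : ι → Fin d => f i = j).filter (fun f => f a = j'),
        |A (fun x => f x)| * |B (fun x => f x)|
        ≤ (∑ g ∈ Ai.filter (fun g => g ⟨a, haS⟩ = j'), |A g|) * KB := by
    intro j'
    refine (sum_abs_mul_restrict_le hST A B _ _ (univ.filter fun h => h ⟨a, haT⟩ = j')
      ?_).trans (mul_le_mul_of_nonneg_left (hB ⟨a, haT⟩ j') (by positivity))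
    intro f hf
    simp only [Ai, mem_filter, mem_univ, true_and] at hf ⊢
    exact ⟨⟨hf.1, hf.2⟩, hf.2⟩
  calc ∑ f ∈ univ.filter (fun f : ι → Fin d => f i = j),
        |A (fun x => f x)| * |B (fun x => f x)|
      = ∑ j' : Fin d,
          ∑ f ∈ (univ.filter fun f : ι → Fin d => f i = j).filter (fun f => f a = j'),
            |A (fun x => f x)| * |B (fun x => f x)| := (sum_fiberwise _ _ _).symm
    _ ≤ ∑ j' : Fin d, (∑ g ∈ Ai.filter (fun g => g ⟨a, haS⟩ = j'), |A g|) * KB :=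
        sum_le_sum fun j' _ => hfiber j'
    _ = (∑ g ∈ Ai, |A g|) * KB := by rw [← sum_mul, sum_fiberwise]
    _ ≤ KA * KB := mul_le_mul_of_nonneg_right (hA ⟨i, hiS⟩ j) (hB.nonneg ⟨a, haT⟩ j)

theorem array_product_margin_bounded
    (k d : ℕ) (S T : Finset (Fin k))
    (hST : S ∪ T = Finset.univ) (hint : (S ∩ T).Nonempty)
    (A : ({x // x ∈ S} → Fin d) → ℝ) (B : ({x // x ∈ T} → Fin d) → ℝ)
    (KA KB : ℝ)
    (hA : MarginBounded d A KA) (hB : MarginBounded d B KB) :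
    MarginBounded d
      (fun f : Fin k → Fin d =>
        A (fun i => f i.1) * B (fun i => f i.1)) (KA * KB) := by
  intro i j
  obtain ⟨a, haST⟩ := hint
  obtain ⟨haS, haT⟩ := mem_inter.mp haST
  simp only [abs_mul]
  rcases mem_union.mp (hST ▸ mem_univ i : i ∈ S ∪ T) with hiS | hiT
  · exact marginal_abs_mul_le_of_mem_left hST haS haT hA hB hiS j
  · simpa only [mul_comm] using
      marginal_abs_mul_le_of_mem_left (union_comm S T ▸ hST) haT haS hB hA hiT j
end

section
/- Connectivity structure of M-bipartitions: let (P,Q) be a bipartition of {1,…,2m} with P having blocks of size ≥ 3 and Q having blocks of size 2, and let G be the graph on vertices {1,…,2m} with an edge between any two elements sharing a block of P or of Q. If G is connected and P has v ≥ 2 blocks, then there exists an ordering p_1,…,p_v of the blocks of P and blocks q_1,…,q_{v−1} of Q such that for each i = 1,…,v−1, the block q_i has exactly one element in p_1 ∪ ⋯ ∪ p_i and its other element in p_{i+1}. -/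
open Finset

private lemma crossing_lemma
    (m : ℕ)
    (P Q : Finpartition (Finset.univ : Finset (Fin (2 * m))))
    (hQ2 : ∀ s ∈ Q.parts, s.card = 2)
    (G : SimpleGraph (Fin (2 * m)))
    (hG : G.Adj = fun i j => i ≠ j ∧
      ∃ s, (s ∈ P.parts ∨ s ∈ Q.parts) ∧ i ∈ s ∧ j ∈ s)
    (hconn : G.Connected)
    (U : Finset (Fin (2 * m)))
    (hUne : U.Nonempty) (hUuniv : U ≠ Finset.univ)
    (hU : ∀ s ∈ P.parts, ∀ x ∈ s, x ∈ U → s ⊆ U) :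
    ∃ qq ∈ Q.parts, (qq ∩ U).card = 1 ∧ ∃ y, y ∈ qq ∧ y ∉ U ∧ qq \ U = {y} := by
  obtain ⟨x, hx⟩ := hUne
  have hss : U ⊂ Finset.univ := Finset.ssubset_univ_iff.mpr hUuniv
  obtain ⟨z, _, hz⟩ := Finset.exists_of_ssubset hss
  obtain ⟨w⟩ := hconn.preconnected x z
  obtain ⟨d, _, hdS, hdnS⟩ := w.exists_boundary_dart (↑U : Set (Fin (2 * m)))
    (Finset.mem_coe.mpr hx) (fun h => hz (Finset.mem_coe.mp h))
  have hadj := d.adj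
  rw [hG] at hadj
  obtain ⟨hne, s, hs, hfs, hss'⟩ := hadj
  have hdS' : d.fst ∈ U := hdS
  have hdnS' : d.snd ∉ U := hdnS
  rcases hs with hsP | hsQ
  · exact absurd (hU s hsP d.fst hfs hdS' hss') hdnS'
  · have hpair : ({d.fst, d.snd} : Finset (Fin (2 * m))) ⊆ s := by
      intro a ha
      rcases Finset.mem_insert.mp ha with rfl | ha
      · exact hfs
      · rcases Finset.mem_singleton.mp ha with rfl
        exact hss'
    have hcard : ({d.fst, d.snd} : Finset (Fin (2 * m))).card = 2 :=
      Finset.card_pair hne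
    have heq : ({d.fst, d.snd} : Finset (Fin (2 * m))) = s :=
      Finset.eq_of_subset_of_card_le hpair (by rw [hQ2 s hsQ, hcard])
    refine ⟨s, hsQ, ?_, d.snd, hss', hdnS', ?_⟩
    · have : s ∩ U = {d.fst} := by
        ext a
        simp only [Finset.mem_inter, Finset.mem_singleton, ← heq, Finset.mem_insert]
        constructor
        · rintro ⟨rfl | rfl, ha⟩
          · rfl
          · exact absurd ha hdnS'
        · rintro rfl
          exact ⟨Or.inl rfl, hdS'⟩
      rw [this, Finset.card_singleton]
    · ext a
      simp only [Finset.mem_sdiff, Finset.mem_singleton, ← heq, Finset.mem_insert]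
      constructor
      · rintro ⟨rfl | rfl, ha⟩
        · exact absurd hdS' ha
        · rfl
      · rintro rfl
        exact ⟨Or.inr rfl, hdnS'⟩

theorem connected_bipartition_block_ordering
    (m v : ℕ)
    (P Q : Finpartition (Finset.univ : Finset (Fin (2 * m))))
    (hP3 : ∀ s ∈ P.parts, 3 ≤ s.card)
    (hQ2 : ∀ s ∈ Q.parts, s.card = 2)
    (hPv : P.parts.card = v) (hv : 2 ≤ v)
    (G : SimpleGraph (Fin (2 * m)))
    (hG : G.Adj = fun i j => i ≠ j ∧
      ∃ s, (s ∈ P.parts ∨ s ∈ Q.parts) ∧ i ∈ s ∧ j ∈ s)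
    (hconn : G.Connected) :
    ∃ p : Fin v → Finset (Fin (2 * m)),
      Function.Injective p ∧ (∀ i, p i ∈ P.parts) ∧
      (∀ s ∈ P.parts, ∃ i, p i = s) ∧
      ∃ q : Fin (v - 1) → Finset (Fin (2 * m)),
        (∀ i, q i ∈ Q.parts) ∧
        ∀ i : Fin (v - 1),
          (q i ∩ (Finset.univ.filter
              (fun t : Fin v => (t : ℕ) ≤ (i : ℕ))).biUnion p).card = 1 ∧
          (q i \ (Finset.univ.filter
              (fun t : Fin v => (t : ℕ) ≤ (i : ℕ))).biUnion p)
            ⊆ p ⟨(i : ℕ) + 1, by omega⟩ := by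
  -- surjectivity from injectivity
  have hsurj : ∀ p : Fin v → Finset (Fin (2 * m)), Function.Injective p →
      (∀ i, p i ∈ P.parts) → ∀ s ∈ P.parts, ∃ j, p j = s := by
    intro p hinj hmem s hs
    have himg : Finset.image p Finset.univ = P.parts := by
      apply Finset.eq_of_subset_of_card_le
      · intro t ht
        obtain ⟨i, _, rfl⟩ := Finset.mem_image.mp ht
        exact hmem i
      · rw [Finset.card_image_of_injective _ hinj, Finset.card_univ, Fintype.card_fin, hPv]
    rw [← himg] at hs
    obtain ⟨j, _, hj⟩ := Finset.mem_image.mp hs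
    exact ⟨j, hj⟩
  have key : ∀ k, k ≤ v - 1 →
      ∃ p : Fin v → Finset (Fin (2 * m)),
        Function.Injective p ∧ (∀ i, p i ∈ P.parts) ∧
        ∃ q : Fin (v - 1) → Finset (Fin (2 * m)),
          (∀ i, q i ∈ Q.parts) ∧
          ∀ i : Fin (v - 1), (i : ℕ) < k →
            (q i ∩ (Finset.univ.filter
                (fun t : Fin v => (t : ℕ) ≤ (i : ℕ))).biUnion p).card = 1 ∧
            (q i \ (Finset.univ.filter
                (fun t : Fin v => (t : ℕ) ≤ (i : ℕ))).biUnion p)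
              ⊆ p ⟨(i : ℕ) + 1, by omega⟩ := by
    intro k
    induction k with
    | zero =>
      intro _
      have e := P.parts.equivFin
      refine ⟨fun i => (e.symm (Fin.cast hPv.symm i) : Finset (Fin (2 * m))), ?_, ?_, ?_⟩
      · intro a b hab
        have := Subtype.coe_injective hab
        have := e.symm.injective this
        exact Fin.cast_injective _ this
      · intro i; exact (e.symm (Fin.cast hPv.symm i)).2
      · -- pick some part of Q
        have hPne : P.parts.Nonempty := by
          rw [← Finset.card_pos, hPv]; omega
        obtain ⟨s0, hs0⟩ := hPne
        have : s0.Nonempty := Finset.card_pos.mp (by have := hP3 s0 hs0; omega)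
        obtain ⟨x0, hx0⟩ := this
        obtain ⟨t0, ht0, _⟩ := Q.exists_mem (Finset.mem_univ x0)
        exact ⟨fun _ => t0, fun _ => ht0, fun i hi => absurd hi (by omega)⟩
    | succ k ih =>
      intro hk
      obtain ⟨p, hpinj, hpmem, q, hqmem, hq⟩ := ih (by omega)
      set U : Finset (Fin (2 * m)) :=
        (Finset.univ.filter (fun t : Fin v => (t : ℕ) ≤ k)).biUnion p with hUdef
      have hmemU : ∀ x, x ∈ U ↔ ∃ t : Fin v, (t : ℕ) ≤ k ∧ x ∈ p t := by
        intro x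
        simp [hUdef, Finset.mem_biUnion, Finset.mem_filter]
      have hv0 : 0 < v := by omega
      have hUne : U.Nonempty := by
        have h0 : ((⟨0, hv0⟩ : Fin v) : ℕ) ≤ k := by simp
        have := Finset.card_pos.mp (by have := hP3 _ (hpmem ⟨0, hv0⟩); omega :
          0 < (p ⟨0, hv0⟩).card)
        obtain ⟨x0, hx0⟩ := this
        exact ⟨x0, (hmemU x0).mpr ⟨⟨0, hv0⟩, h0, hx0⟩⟩
      have hclosed : ∀ s ∈ P.parts, ∀ x ∈ s, x ∈ U → s ⊆ U := by
        intro s hs x hxs hxU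
        obtain ⟨t, htk, hxt⟩ := (hmemU x).mp hxU
        have : s = p t := P.eq_of_mem_parts hs (hpmem t) hxs hxt
        rw [this]
        intro a ha
        exact (hmemU a).mpr ⟨t, htk, ha⟩
      have hk1v : k + 1 < v := by omega
      set a : Fin v := ⟨k + 1, hk1v⟩ with hadef
      have hUuniv : U ≠ Finset.univ := by
        obtain ⟨ya, hya⟩ := Finset.card_pos.mp
          (by have := hP3 _ (hpmem a); omega : 0 < (p a).card)
        intro h
        have : ya ∈ U := h ▸ Finset.mem_univ ya
        obtain ⟨t, htk, hyt⟩ := (hmemU ya).mp this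
        have : p t = p a := P.eq_of_mem_parts (hpmem t) (hpmem a) hyt hya
        have hta := hpinj this
        rw [hta] at htk
        have : (a : ℕ) = k + 1 := rfl
        omega
      obtain ⟨qq, hqqQ, hqqcard, y, hyqq, hyU, hqqsd⟩ :=
        crossing_lemma m P Q hQ2 G hG hconn U hUne hUuniv hclosed
      obtain ⟨py, hpyP, hypy⟩ := P.exists_mem (Finset.mem_univ y)
      obtain ⟨j, hj⟩ := hsurj p hpinj hpmem py hpyP
      have hjk : k + 1 ≤ (j : ℕ) := by
        by_contra h
        push_neg at h
        have : y ∈ U := (hmemU y).mpr ⟨j, by omega, hj ▸ hypy⟩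
        exact hyU this
      -- swap
      set p' : Fin v → Finset (Fin (2 * m)) := p ∘ Equiv.swap a j with hp'def
      have hp'inj : Function.Injective p' := hpinj.comp (Equiv.swap a j).injective
      have hp'mem : ∀ i, p' i ∈ P.parts := fun i => hpmem _
      have hagree : ∀ t : Fin v, (t : ℕ) ≤ k → p' t = p t := by
        intro t ht
        have h1 : t ≠ a := Fin.ne_of_val_ne (by omega : (t : ℕ) ≠ k + 1)
        have h2 : t ≠ j := Fin.ne_of_val_ne (by omega)
        simp [hp'def, Equiv.swap_apply_of_ne_of_ne h1 h2]
      have hp'a : p' a = py := by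
        simp [hp'def, Equiv.swap_apply_left, hj]
      have hbu : ∀ n : ℕ, n ≤ k →
          (Finset.univ.filter (fun t : Fin v => (t : ℕ) ≤ n)).biUnion p' =
          (Finset.univ.filter (fun t : Fin v => (t : ℕ) ≤ n)).biUnion p := by
        intro n hn
        apply Finset.biUnion_congr rfl
        intro t ht
        rw [Finset.mem_filter] at ht
        exact hagree t (le_trans ht.2 hn)
      have hkv1 : k < v - 1 := by omega
      set i0 : Fin (v - 1) := ⟨k, hkv1⟩ with hi0def
      set q' : Fin (v - 1) → Finset (Fin (2 * m)) := Function.update q i0 qq with hq'def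
      have hq'mem : ∀ i, q' i ∈ Q.parts := by
        intro i
        by_cases h : i = i0
        · rw [hq'def, h, Function.update_self]; exact hqqQ
        · rw [hq'def, Function.update_of_ne h]; exact hqmem i
      refine ⟨p', hp'inj, hp'mem, q', hq'mem, ?_⟩
      intro i hi
      by_cases h : i = i0
      · subst h
        have hq'i : q' i0 = qq := by rw [hq'def, Function.update_self]
        have hUeq : (Finset.univ.filter
            (fun t : Fin v => (t : ℕ) ≤ (i0 : ℕ))).biUnion p' = U :=
          (hbu k le_rfl).trans hUdef.symm
        rw [hq'i, hUeq]
        constructor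
        · exact hqqcard
        · rw [hqqsd]
          intro b hb
          rw [Finset.mem_singleton] at hb
          rw [hb]
          show y ∈ p' a
          rw [hp'a]
          exact hypy
      · have hilt : (i : ℕ) < k := by
          have : (i : ℕ) ≠ k := fun hh => h (Fin.ext hh)
          omega
        have hq'i : q' i = q i := by rw [hq'def, Function.update_of_ne h]
        obtain ⟨hc1, hc2⟩ := hq i hilt
        rw [hq'i, hbu (i : ℕ) (by omega)]
        refine ⟨hc1, ?_⟩
        have : p' ⟨(i : ℕ) + 1, by omega⟩ = p ⟨(i : ℕ) + 1, by omega⟩ :=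
          hagree _ (by simpa using by omega)
        rw [this]
        exact hc2
  obtain ⟨p, hpinj, hpmem, q, hqmem, hq⟩ := key (v - 1) le_rfl
  exact ⟨p, hpinj, hpmem, hsurj p hpinj hpmem, q, hqmem, fun i => hq i i.2⟩
end
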